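/- arXiv:2009.07699 — 4 statements merged into one kernel-verified Lean document; each statement's English description precedes it below -/
import Mathlib

section
/- Let N ≥ 2, α ∈ (0,N), and let Ω, F ⊆ ℝ^N be two Lebesgue-measurable sets of finite measure such that the symmetric difference Ω Δ F is contained in some ball B_R(0). Then V_α(F) − V_α(Ω) ≤ C₀ · |Ω Δ F| · ( |Ω|^{α/N} + |F|^{α/N} ), where C₀ = C₀(N,α) = ∫_B |z|^{α−N} dz and B is the open ball in ℝ^N centered at the origin with Lebesgue measure 1. -/
/-!
Write `V(S, T) = ∫_S ∫_T |x - y|^{α-N} dy dx`. Since `F × F` is covered by `Ω × Ω`, `(F \ Ω) × F`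
and `Ω × (F \ Ω)`, and the kernel is symmetric, `V(F) ≤ V(Ω) + V(F \ Ω, F) + V(F \ Ω, Ω)`.
The kernel is radially decreasing, so by the bathtub principle the potential `∫_A |x - y|^{α-N} dy`
of a set `A` of finite measure is at most that of the ball around `x` of the same measure, which by
scaling is `|A|^{α/N} C₀`. Hence `V(F \ Ω, A) ≤ C₀ |A|^{α/N} |F \ Ω|` for `A = Ω, F`.
-/
open MeasureTheory Metric Set Module
open scoped ENNReal

section Haar

variable {E : Type*} [NormedAddCommGroup E] [NormedSpace ℝ E] [FiniteDimensional ℝ E]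
  [MeasurableSpace E] [BorelSpace E] (μ : Measure E) [μ.IsAddHaarMeasure]

theorem setLIntegral_ball_norm_rpow_mul {c : ℝ} (hc : 0 < c) (β s : ℝ) :
    ∫⁻ z in ball (0 : E) (c * s), ENNReal.ofReal (‖z‖ ^ β) ∂μ =
      ENNReal.ofReal (c ^ (β + finrank ℝ E)) *
        ∫⁻ z in ball (0 : E) s, ENNReal.ofReal (‖z‖ ^ β) ∂μ := by
  have hμ : μ = ENNReal.ofReal (c ^ finrank ℝ E) • μ.map (c • ·) := by
    rw [Measure.map_addHaar_smul μ hc.ne', smul_smul, abs_of_pos (by positivity),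
      ← ENNReal.ofReal_mul (by positivity), mul_inv_cancel₀ (by positivity), ENNReal.ofReal_one,
      one_smul]
  have hpre : (c • ·) ⁻¹' ball (0 : E) (c * s) = ball 0 s := by
    ext z
    simp [norm_smul, abs_of_pos hc, hc]
  calc ∫⁻ z in ball (0 : E) (c * s), ENNReal.ofReal (‖z‖ ^ β) ∂μ
      = ENNReal.ofReal (c ^ finrank ℝ E) *
          ∫⁻ z in ball 0 s, ENNReal.ofReal (‖c • z‖ ^ β) ∂μ := by
        conv_lhs => rw [hμ]
        rw [Measure.restrict_smul, lintegral_smul_measure, smul_eq_mul,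
          setLIntegral_map measurableSet_ball (by fun_prop) (by fun_prop), hpre]
    _ = ENNReal.ofReal (c ^ finrank ℝ E) *
          ∫⁻ z in ball 0 s, ENNReal.ofReal (c ^ β) * ENNReal.ofReal (‖z‖ ^ β) ∂μ := by
        simp_rw [norm_smul, Real.norm_of_nonneg hc.le,
          Real.mul_rpow hc.le (norm_nonneg _), ENNReal.ofReal_mul (Real.rpow_nonneg hc.le _)]
    _ = _ := by
        rw [lintegral_const_mul _ (by fun_prop), ← mul_assoc, ← ENNReal.ofReal_mul (by positivity),
          ← Real.rpow_natCast, ← Real.rpow_add hc, add_comm]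

theorem setLIntegral_ball_norm_rpow_lt_top [Nontrivial E] {β : ℝ} (hβ : -finrank ℝ E < β) (s : ℝ) :
    ∫⁻ z in ball (0 : E) s, ENNReal.ofReal (‖z‖ ^ β) ∂μ < ∞ := by
  refine Integrable.lintegral_lt_top
    (integrableOn_ball_of_norm_le_rpow (C := 1) (α := -β) finrank_pos (by linarith) ?_
      (by fun_prop : Measurable fun z : E => ‖z‖ ^ β).aestronglyMeasurable)
  refine ae_of_all _ fun z => ?_
  rw [one_mul, neg_neg, Real.norm_of_nonneg (Real.rpow_nonneg (norm_nonneg _) _)]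

theorem setLIntegral_ball_comp_sub_left (f : E → ℝ≥0∞) (x : E) (ρ : ℝ) :
    ∫⁻ y in ball x ρ, f (x - y) ∂μ = ∫⁻ z in ball 0 ρ, f z ∂μ := by
  have hpre : (x - ·) ⁻¹' ball (0 : E) ρ = ball x ρ := by
    ext y
    simp [dist_eq_norm, norm_sub_rev]
  rw [← hpre]
  exact (Measure.measurePreserving_sub_left μ x).setLIntegral_comp_preimage_emb
    (MeasurableEquiv.subLeft x).measurableEmbedding f _

end Haar

theorem setLIntegral_le_setLIntegral_of_measure_eq {α : Type*} [MeasurableSpace α]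
    {μ : Measure α} {f : α → ℝ≥0∞} {A B : Set α} {c : ℝ≥0∞} (hA : MeasurableSet A)
    (hB : MeasurableSet B) (hAB : μ A = μ B) (hμB : μ B ≠ ∞)
    (hle : ∀ y ∈ A \ B, f y ≤ c) (hge : ∀ᵐ y ∂μ, y ∈ B \ A → c ≤ f y) :
    ∫⁻ y in A, f y ∂μ ≤ ∫⁻ y in B, f y ∂μ := by
  have hdiff : μ (A \ B) = μ (B \ A) :=
    measure_sdiff_symm hA.nullMeasurableSet hB.nullMeasurableSet hAB
      (measure_ne_top_of_subset inter_subset_right hμB)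
  calc ∫⁻ y in A, f y ∂μ = ∫⁻ y in A ∩ B, f y ∂μ + ∫⁻ y in A \ B, f y ∂μ :=
        (lintegral_inter_add_sdiff f A hB).symm
    _ ≤ ∫⁻ y in B ∩ A, f y ∂μ + c * μ (B \ A) := by
        rw [inter_comm, ← hdiff, ← setLIntegral_const]
        exact add_le_add le_rfl (setLIntegral_mono' (hA.diff hB) hle)
    _ ≤ ∫⁻ y in B ∩ A, f y ∂μ + ∫⁻ y in B \ A, f y ∂μ := by
        rw [← setLIntegral_const]
        exact add_le_add le_rfl (setLIntegral_mono_ae' (hB.diff hA) hge)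
    _ = ∫⁻ y in B, f y ∂μ := lintegral_inter_add_sdiff f B hA

theorem setLIntegral_setLIntegral_le_add {α : Type*} [MeasurableSpace α] {μ : Measure α}
    [SFinite μ] {K : α → α → ℝ≥0∞} (hK : Measurable (Function.uncurry K)) (S T : Set α) :
    ∫⁻ x in T, ∫⁻ y in T, K x y ∂μ ∂μ ≤
      ∫⁻ x in S, ∫⁻ y in S, K x y ∂μ ∂μ + ∫⁻ x in T \ S, ∫⁻ y in T, K x y ∂μ ∂μ +
        ∫⁻ x in S, ∫⁻ y in T \ S, K x y ∂μ ∂μ := by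
  have hprod (A B : Set α) : ∫⁻ x in A, ∫⁻ y in B, K x y ∂μ ∂μ =
      ∫⁻ p in A ×ˢ B, Function.uncurry K p ∂μ.prod μ :=
    (setLIntegral_prod _ hK.aemeasurable).symm
  have hcover : T ×ˢ T ⊆ S ×ˢ S ∪ (T \ S) ×ˢ T ∪ S ×ˢ (T \ S) := by
    rintro ⟨x, y⟩ ⟨hx, hy⟩
    by_cases hxS : x ∈ S <;> by_cases hyS : y ∈ S <;> simp_all
  simp only [hprod]
  exact (lintegral_mono_set hcover).trans <| (lintegral_union_le _ _ _).trans <|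
    add_le_add_left (lintegral_union_le _ _ _) _

theorem setLIntegral_setLIntegral_comp_norm_sub_comm {E : Type*} [SeminormedAddCommGroup E]
    [MeasurableSpace E] [OpensMeasurableSpace E] [SecondCountableTopology E] {μ : Measure E}
    [SFinite μ] {g : ℝ → ℝ≥0∞} (hg : Measurable g) (S T : Set E) :
    ∫⁻ x in S, ∫⁻ y in T, g ‖x - y‖ ∂μ ∂μ = ∫⁻ x in T, ∫⁻ y in S, g ‖x - y‖ ∂μ ∂μ := by
  have hK : Measurable (Function.uncurry fun x y : E => g ‖x - y‖) :=
    hg.comp (continuous_fst.sub continuous_snd).norm.measurable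
  rw [lintegral_lintegral_swap hK.aemeasurable]
  simp_rw [norm_sub_rev]

theorem integral_integral_eq_toReal_lintegral_lintegral {α β : Type*} [MeasurableSpace α]
    [MeasurableSpace β] {μ : Measure α} {ν : Measure β} [SFinite ν] {f : α → β → ℝ}
    (hf : Measurable (Function.uncurry f)) (hf₀ : ∀ x y, 0 ≤ f x y)
    (hfin : ∀ᵐ x ∂μ, ∫⁻ y, ENNReal.ofReal (f x y) ∂ν ≠ ∞) :
    ∫ x, ∫ y, f x y ∂ν ∂μ = (∫⁻ x, ∫⁻ y, ENNReal.ofReal (f x y) ∂ν ∂μ).toReal := by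
  have hinner (x : α) : ∫ y, f x y ∂ν = (∫⁻ y, ENNReal.ofReal (f x y) ∂ν).toReal :=
    integral_eq_lintegral_of_nonneg_ae (ae_of_all _ (hf₀ x))
      (hf.comp measurable_prodMk_left).aestronglyMeasurable
  have hmeas : Measurable fun x => ∫⁻ y, ENNReal.ofReal (f x y) ∂ν :=
    hf.ennreal_ofReal.lintegral_prod_right'
  simp_rw [hinner]
  rw [integral_eq_lintegral_of_nonneg_ae (ae_of_all _ fun _ => ENNReal.toReal_nonneg)
    hmeas.ennreal_toReal.aestronglyMeasurable]
  exact congrArg ENNReal.toReal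
    (lintegral_congr_ae (hfin.mono fun x hx => ENNReal.ofReal_toReal hx))

section Riesz

variable {E : Type*} [NormedAddCommGroup E] [NormedSpace ℝ E] [FiniteDimensional ℝ E]
  [MeasurableSpace E] [BorelSpace E] [Nontrivial E] (μ : Measure E) [μ.IsAddHaarMeasure]
  {α r : ℝ}

theorem setLIntegral_norm_sub_rpow_le (hα : α ≤ finrank ℝ E) (hball : μ (ball 0 r) = 1)
    {A : Set E} (hA : MeasurableSet A) (hAfin : μ A ≠ ∞) (x : E) :
    ∫⁻ y in A, ENNReal.ofReal (‖x - y‖ ^ (α - finrank ℝ E)) ∂μ ≤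
      ENNReal.ofReal ((μ A).toReal ^ (α / finrank ℝ E)) *
        ∫⁻ z in ball (0 : E) r, ENNReal.ofReal (‖z‖ ^ (α - finrank ℝ E)) ∂μ := by
  rcases eq_or_ne (μ A) 0 with hA₀ | hA₀
  · rw [setLIntegral_measure_zero _ _ hA₀]
    exact bot_le
  have hr : 0 < r := by
    by_contra! hr
    rw [ball_eq_empty.2 hr, measure_empty] at hball
    exact zero_ne_one hball
  have hn : (finrank ℝ E : ℝ) ≠ 0 := by exact_mod_cast finrank_pos.ne'
  set c := (μ A).toReal ^ (finrank ℝ E : ℝ)⁻¹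
  have hc : 0 < c := Real.rpow_pos_of_pos (ENNReal.toReal_pos hA₀ hAfin) _
  have hρ : 0 < c * r := mul_pos hc hr
  have hB : μ (ball x (c * r)) = μ A := by
    rw [Measure.addHaar_ball_mul_of_pos μ x hc, hball, mul_one, ← Real.rpow_natCast,
      ← Real.rpow_mul ENNReal.toReal_nonneg, inv_mul_cancel₀ hn, Real.rpow_one,
      ENNReal.ofReal_toReal hAfin]
  have hexp : α - finrank ℝ E ≤ 0 := sub_nonpos.2 hα
  calc ∫⁻ y in A, ENNReal.ofReal (‖x - y‖ ^ (α - finrank ℝ E)) ∂μ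
      ≤ ∫⁻ y in ball x (c * r), ENNReal.ofReal (‖x - y‖ ^ (α - finrank ℝ E)) ∂μ := by
        refine setLIntegral_le_setLIntegral_of_measure_eq hA measurableSet_ball hB.symm
          (hB ▸ hAfin) (c := ENNReal.ofReal ((c * r) ^ (α - finrank ℝ E))) ?_ ?_
        · rintro y ⟨-, hy⟩
          rw [mem_ball, dist_eq_norm, norm_sub_rev, not_lt] at hy
          exact ENNReal.ofReal_le_ofReal (Real.rpow_le_rpow_of_nonpos hρ hy hexp)
        · filter_upwards [Measure.ae_ne μ x] with y hyx hy
          replace hy : ‖x - y‖ < c * r := by rw [← dist_eq_norm, dist_comm]; exact hy.1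
          exact ENNReal.ofReal_le_ofReal (Real.rpow_le_rpow_of_nonpos
            (norm_pos_iff.2 (sub_ne_zero.2 hyx.symm)) hy.le hexp)
    _ = ∫⁻ z in ball 0 (c * r), ENNReal.ofReal (‖z‖ ^ (α - finrank ℝ E)) ∂μ :=
        setLIntegral_ball_comp_sub_left μ (fun z => ENNReal.ofReal (‖z‖ ^ _)) x _
    _ = ENNReal.ofReal (c ^ α) *
          ∫⁻ z in ball (0 : E) r, ENNReal.ofReal (‖z‖ ^ (α - finrank ℝ E)) ∂μ := by
        rw [setLIntegral_ball_norm_rpow_mul μ hc, sub_add_cancel]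
    _ = _ := by
        rw [← Real.rpow_mul ENNReal.toReal_nonneg, inv_mul_eq_div]

theorem setLIntegral_setLIntegral_norm_sub_rpow_le (hα : α ≤ finrank ℝ E)
    (hball : μ (ball 0 r) = 1) (S : Set E) {T : Set E} (hT : MeasurableSet T) (hTfin : μ T ≠ ∞) :
    ∫⁻ x in S, ∫⁻ y in T, ENNReal.ofReal (‖x - y‖ ^ (α - finrank ℝ E)) ∂μ ∂μ ≤
      ENNReal.ofReal ((μ T).toReal ^ (α / finrank ℝ E)) *
        (∫⁻ z in ball (0 : E) r, ENNReal.ofReal (‖z‖ ^ (α - finrank ℝ E)) ∂μ) * μ S :=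
  (lintegral_mono fun x => setLIntegral_norm_sub_rpow_le μ hα hball hT hTfin x).trans_eq
    (setLIntegral_const _ _)

theorem setLIntegral_setLIntegral_norm_sub_rpow_le_add (hα : α ≤ finrank ℝ E)
    (hball : μ (ball 0 r) = 1) {Ω F : Set E} (hΩ : MeasurableSet Ω) (hF : MeasurableSet F)
    (hΩfin : μ Ω ≠ ∞) (hFfin : μ F ≠ ∞) :
    ∫⁻ x in F, ∫⁻ y in F, ENNReal.ofReal (‖x - y‖ ^ (α - finrank ℝ E)) ∂μ ∂μ ≤
      ∫⁻ x in Ω, ∫⁻ y in Ω, ENNReal.ofReal (‖x - y‖ ^ (α - finrank ℝ E)) ∂μ ∂μ +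
        (ENNReal.ofReal ((μ Ω).toReal ^ (α / finrank ℝ E)) +
          ENNReal.ofReal ((μ F).toReal ^ (α / finrank ℝ E))) *
          (∫⁻ z in ball (0 : E) r, ENNReal.ofReal (‖z‖ ^ (α - finrank ℝ E)) ∂μ) * μ (F \ Ω) := by
  have hsymm := setLIntegral_setLIntegral_comp_norm_sub_comm (μ := μ)
    (g := fun t => ENNReal.ofReal (t ^ (α - finrank ℝ E))) (by fun_prop) Ω (F \ Ω)
  calc _ ≤ _ := setLIntegral_setLIntegral_le_add (by fun_prop) Ω F
    _ ≤ _ := by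
        rw [hsymm, add_assoc, add_mul, add_mul, add_comm (_ * _ * _) (_ * _ * _)]
        gcongr
        · exact setLIntegral_setLIntegral_norm_sub_rpow_le μ hα hball _ hF hFfin
        · exact setLIntegral_setLIntegral_norm_sub_rpow_le μ hα hball _ hΩ hΩfin

theorem integral_integral_norm_sub_rpow_sub_le (hα : α ∈ Ioo 0 (finrank ℝ E : ℝ))
    (hball : μ (ball 0 r) = 1) {Ω F : Set E} (hΩ : MeasurableSet Ω) (hF : MeasurableSet F)
    (hΩfin : μ Ω ≠ ∞) (hFfin : μ F ≠ ∞) :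
    (∫ x in F, ∫ y in F, ‖x - y‖ ^ (α - finrank ℝ E) ∂μ ∂μ) -
        (∫ x in Ω, ∫ y in Ω, ‖x - y‖ ^ (α - finrank ℝ E) ∂μ ∂μ) ≤
      (∫ z in ball (0 : E) r, ‖z‖ ^ (α - finrank ℝ E) ∂μ) * (μ (symmDiff Ω F)).toReal *
        ((μ Ω).toReal ^ (α / finrank ℝ E) + (μ F).toReal ^ (α / finrank ℝ E)) := by
  obtain ⟨hα₀, hαn⟩ := hα
  have hL : ∫⁻ z in ball (0 : E) r, ENNReal.ofReal (‖z‖ ^ (α - finrank ℝ E)) ∂μ ≠ ∞ :=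
    (setLIntegral_ball_norm_rpow_lt_top μ (by linarith) r).ne
  have hV (S : Set E) (hS : MeasurableSet S) (hSfin : μ S ≠ ∞) :
      ∫ x in S, ∫ y in S, ‖x - y‖ ^ (α - finrank ℝ E) ∂μ ∂μ =
        (∫⁻ x in S, ∫⁻ y in S, ENNReal.ofReal (‖x - y‖ ^ (α - finrank ℝ E)) ∂μ ∂μ).toReal :=
    integral_integral_eq_toReal_lintegral_lintegral (by fun_prop) (fun _ _ => by positivity)
      (ae_of_all _ fun x => ((setLIntegral_norm_sub_rpow_le μ hαn.le hball hS hSfin x).trans_lt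
        (ENNReal.mul_lt_top ENNReal.ofReal_lt_top hL.lt_top)).ne)
  have hC₀ : ∫ z in ball (0 : E) r, ‖z‖ ^ (α - finrank ℝ E) ∂μ =
      (∫⁻ z in ball (0 : E) r, ENNReal.ofReal (‖z‖ ^ (α - finrank ℝ E)) ∂μ).toReal :=
    integral_eq_lintegral_of_nonneg_ae (ae_of_all _ fun _ => by positivity)
      (by fun_prop : Measurable fun z : E => ‖z‖ ^ (α - finrank ℝ E)).aestronglyMeasurable
  have hVΩ := (setLIntegral_setLIntegral_norm_sub_rpow_le μ hαn.le hball Ω hΩ hΩfin).trans_lt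
    (by finiteness)
  have hFΩ : μ (F \ Ω) ≠ ∞ := measure_ne_top_of_subset sdiff_subset hFfin
  have hdiff : (μ (F \ Ω)).toReal ≤ (μ (symmDiff Ω F)).toReal := by
    refine ENNReal.toReal_mono (measure_symmDiff_ne_top hΩfin hFfin) (measure_mono ?_)
    rw [Set.symmDiff_def]
    exact subset_union_right
  rw [hV F hF hFfin, hV Ω hΩ hΩfin, hC₀, sub_le_iff_le_add']
  calc _ ≤ _ := ENNReal.toReal_mono (by finiteness)
        (setLIntegral_setLIntegral_norm_sub_rpow_le_add μ hαn.le hball hΩ hF hΩfin hFfin)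
    _ = _ := by
        rw [ENNReal.toReal_add (by finiteness) (by finiteness), ENNReal.toReal_mul,
          ENNReal.toReal_mul, ENNReal.toReal_add (by finiteness) (by finiteness),
          ENNReal.toReal_ofReal (by positivity), ENNReal.toReal_ofReal (by positivity)]
    _ ≤ _ := by
        gcongr _ + ?_
        rw [mul_comm (_ + _), mul_right_comm]
        gcongr

end Riesz

theorem riesz_energy_diff_le_general (N : ℕ) (α : ℝ) (hα : α ∈ Set.Ioo (0 : ℝ) N)
    (Ω F : Set (EuclideanSpace ℝ (Fin N)))
    (hΩmeas : MeasurableSet Ω) (hFmeas : MeasurableSet F)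
    (hΩfin : volume Ω < ⊤) (hFfin : volume F < ⊤)
    (r : ℝ)
    (hball : volume (ball (0 : EuclideanSpace ℝ (Fin N)) r) = 1) :
    (∫ x in F, ∫ y in F, ‖x - y‖ ^ (α - N)) - (∫ x in Ω, ∫ y in Ω, ‖x - y‖ ^ (α - N)) ≤
      (∫ z in ball (0 : EuclideanSpace ℝ (Fin N)) r, ‖z‖ ^ (α - N)) *
        (volume (symmDiff Ω F)).toReal *
        ((volume Ω).toReal ^ (α / N) + (volume F).toReal ^ (α / N)) := by
  have : NeZero N := ⟨by rintro rfl; simpa using hα.1.trans hα.2⟩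
  have h := integral_integral_norm_sub_rpow_sub_le volume (by rwa [finrank_euclideanSpace_fin])
    hball hΩmeas hFmeas hΩfin.ne hFfin.ne
  rwa [finrank_euclideanSpace_fin] at h

/-- For `N ≥ 2`, `α ∈ (0,N)` and measurable sets `Ω, F ⊆ ℝ^N` of finite
measure whose symmetric difference is contained in some ball `B_R(0)`, one has
`V_α(F) − V_α(Ω) ≤ C₀ · |Ω Δ F| · (|Ω|^{α/N} + |F|^{α/N})`, where
`C₀ = ∫_B |z|^{α−N} dz` and `B` is the ball centered at the origin of Lebesgue measure 1. -/
theorem riesz_energy_diff_le (N : ℕ) (hN : 2 ≤ N) (α : ℝ) (hα : α ∈ Set.Ioo (0 : ℝ) N)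
    (Ω F : Set (EuclideanSpace ℝ (Fin N)))
    (hΩmeas : MeasurableSet Ω) (hFmeas : MeasurableSet F)
    (hΩfin : volume Ω < ⊤) (hFfin : volume F < ⊤)
    (R : ℝ) (hR : 0 < R)
    (hsub : symmDiff Ω F ⊆ ball (0 : EuclideanSpace ℝ (Fin N)) R)
    (r : ℝ) (hr : 0 < r)
    (hball : volume (ball (0 : EuclideanSpace ℝ (Fin N)) r) = 1) :
    (∫ x in F, ∫ y in F, ‖x - y‖ ^ (α - N)) - (∫ x in Ω, ∫ y in Ω, ‖x - y‖ ^ (α - N)) ≤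
      (∫ z in ball (0 : EuclideanSpace ℝ (Fin N)) r, ‖z‖ ^ (α - N)) *
        (volume (symmDiff Ω F)).toReal *
        ((volume Ω).toReal ^ (α / N) + (volume F).toReal ^ (α / N)) :=
  riesz_energy_diff_le_general N α hα Ω F hΩmeas hFmeas hΩfin hFfin r hball
end

section
/- Let N ≥ 2, α ∈ (0,N), and let Ω, F ⊆ ℝ^N be bounded Lebesgue-measurable sets. Then V_α(F) − V_α(Ω) = ∫_{F\Ω} (v_F(x) + v_Ω(x)) dx − ∫_{Ω\F} (v_F(x) + v_Ω(x)) dx, and in particular V_α(F) − V_α(Ω) ≤ ∫_{Ω Δ F} (v_F(x) + v_Ω(x)) dx. -/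
/-!
Since the kernel `z ↦ ‖z‖ ^ (α - N)` is even, `V(F) - V(Ω) = ⟨𝟙_F - 𝟙_Ω, 𝟙_F + 𝟙_Ω⟩` for the
bilinear form `⟨f, g⟩ = ∬ f(x) g(y) |x - y|^(α-N)`, and `𝟙_F - 𝟙_Ω = 𝟙_{F\Ω} - 𝟙_{Ω\F}`.
Everything is finite because the kernel is locally integrable for `α > 0`, and a locally
integrable kernel `k(x - y)` is integrable on `A × B` for bounded `A`, `B`.
-/

open MeasureTheory Metric Set
open scoped ENNReal

section Convolution

variable {G : Type*} [NormedAddCommGroup G] [MeasurableSpace G] [BorelSpace G]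
  {μ : Measure G} [μ.IsAddLeftInvariant] [μ.IsNegInvariant]

lemma setLIntegral_comp_sub_le_closedBall (k : G → ℝ≥0∞) {x : G} {B : Set G} {R : ℝ}
    (hB : B ⊆ closedBall x R) :
    ∫⁻ y in B, k (x - y) ∂μ ≤ ∫⁻ z in closedBall 0 R, k z ∂μ :=
  calc ∫⁻ y in B, k (x - y) ∂μ ≤ ∫⁻ y in closedBall x R, k (x - y) ∂μ := lintegral_mono_set hB
    _ = ∫⁻ y in closedBall x R, (closedBall 0 R).indicator k (x - y) ∂μ :=
        setLIntegral_congr_fun measurableSet_closedBall fun y hy => by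
          rw [indicator_of_mem (by simpa [dist_eq_norm, norm_sub_rev] using hy)]
    _ ≤ ∫⁻ y, (closedBall 0 R).indicator k (x - y) ∂μ := setLIntegral_le_lintegral _ _
    _ = ∫⁻ z in closedBall 0 R, k z ∂μ := by
        rw [lintegral_sub_left_eq_self, lintegral_indicator measurableSet_closedBall]

variable [ProperSpace G] [IsFiniteMeasureOnCompacts μ] [SFinite μ]

lemma integrable_comp_sub_prod_restrict {E : Type*} [NormedAddCommGroup E] {k : G → E}
    (hk : LocallyIntegrable k μ) {A B : Set G} (hA : Bornology.IsBounded A)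
    (hB : Bornology.IsBounded B) :
    Integrable (fun p : G × G => k (p.1 - p.2)) ((μ.restrict A).prod (μ.restrict B)) := by
  obtain ⟨R, hR⟩ := (hA.union hB).subset_closedBall 0
  have hBx : ∀ x ∈ A, B ⊆ closedBall x (R + R) := fun x hx y hy =>
    calc dist y x ≤ dist y 0 + dist x 0 := dist_triangle_right _ _ _
      _ ≤ R + R := add_le_add (hR (Or.inr hy)) (hR (Or.inl hx))
  set C := ∫⁻ z in closedBall 0 (R + R), ‖k z‖ₑ ∂μ
  have hC : C < ∞ := (hk.integrableOn_isCompact (isCompact_closedBall 0 _)).2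
  refine ⟨?_, ?_⟩
  · rw [Measure.prod_restrict]
    exact (hk.aestronglyMeasurable.comp_quasiMeasurePreserving
      (quasiMeasurePreserving_sub μ μ)).restrict
  calc ∫⁻ p, ‖k (p.1 - p.2)‖ₑ ∂(μ.restrict A).prod (μ.restrict B)
      ≤ ∫⁻ x in A, ∫⁻ y in B, ‖k (x - y)‖ₑ ∂μ ∂μ := lintegral_prod_le _
    _ ≤ ∫⁻ _ in A, C ∂μ :=
        setLIntegral_mono measurable_const fun x hx =>
          setLIntegral_comp_sub_le_closedBall (fun z => ‖k z‖ₑ) (hBx x hx)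
    _ = C * μ A := setLIntegral_const _ _
    _ < ∞ := ENNReal.mul_lt_top hC hA.measure_lt_top

end Convolution

lemma setIntegral_sub_setIntegral_eq_sdiff {X E : Type*} [MeasurableSpace X]
    [NormedAddCommGroup E] [NormedSpace ℝ E] {μ : Measure X} {f : X → E} {s t : Set X}
    (hs : MeasurableSet s) (ht : MeasurableSet t) (hfs : IntegrableOn f s μ)
    (hft : IntegrableOn f t μ) :
    ∫ x in s, f x ∂μ - ∫ x in t, f x ∂μ = ∫ x in s \ t, f x ∂μ - ∫ x in t \ s, f x ∂μ := by
  rw [← integral_inter_add_sdiff ht hfs, ← integral_inter_add_sdiff hs hft, inter_comm]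
  abel

section EvenKernel

variable {G : Type*} [NormedAddCommGroup G] [ProperSpace G] [MeasurableSpace G] [BorelSpace G]
  {μ : Measure G} [μ.IsAddLeftInvariant] [μ.IsNegInvariant] [IsFiniteMeasureOnCompacts μ]
  [SFinite μ] {E : Type*} [NormedAddCommGroup E] [NormedSpace ℝ E] {k : G → E}
  {A B Ω F : Set G}

lemma integrableOn_setIntegral_comp_sub (hk : LocallyIntegrable k μ)
    (hA : Bornology.IsBounded A) (hB : Bornology.IsBounded B) :
    IntegrableOn (fun x => ∫ y in B, k (x - y) ∂μ) A μ :=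
  (integrable_comp_sub_prod_restrict hk hA hB).integral_prod_left

lemma setIntegral_setIntegral_comp_sub_comm (hk : LocallyIntegrable k μ)
    (hk_even : Function.Even k) (hA : Bornology.IsBounded A) (hB : Bornology.IsBounded B) :
    ∫ x in A, ∫ y in B, k (x - y) ∂μ ∂μ = ∫ x in B, ∫ y in A, k (x - y) ∂μ ∂μ := by
  rw [integral_integral_swap (integrable_comp_sub_prod_restrict hk hA hB)]
  congr 1 with x
  congr 1 with y
  rw [← hk_even, neg_sub]

theorem energy_sub_energy_eq_setIntegral_sdiff (hk : LocallyIntegrable k μ)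
    (hk_even : Function.Even k) (hΩmeas : MeasurableSet Ω) (hFmeas : MeasurableSet F)
    (hΩbd : Bornology.IsBounded Ω) (hFbd : Bornology.IsBounded F) :
    (∫ x in F, ∫ y in F, k (x - y) ∂μ ∂μ) - ∫ x in Ω, ∫ y in Ω, k (x - y) ∂μ ∂μ =
      (∫ x in F \ Ω, ((∫ y in F, k (x - y) ∂μ) + ∫ y in Ω, k (x - y) ∂μ) ∂μ) -
        ∫ x in Ω \ F, ((∫ y in F, k (x - y) ∂μ) + ∫ y in Ω, k (x - y) ∂μ) ∂μ := by
  have hv {A B : Set G} (hA : Bornology.IsBounded A) (hB : Bornology.IsBounded B) :=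
    integrableOn_setIntegral_comp_sub (μ := μ) hk hA hB
  have hP {A : Set G} (hA : Bornology.IsBounded A) : IntegrableOn
      (fun x => (∫ y in F, k (x - y) ∂μ) + ∫ y in Ω, k (x - y) ∂μ) A μ :=
    (hv hA hFbd).add (hv hA hΩbd)
  rw [← setIntegral_sub_setIntegral_eq_sdiff hFmeas hΩmeas (hP hFbd) (hP hΩbd),
    integral_add (hv hFbd hFbd) (hv hFbd hΩbd), integral_add (hv hΩbd hFbd) (hv hΩbd hΩbd),
    setIntegral_setIntegral_comp_sub_comm hk hk_even hFbd hΩbd]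
  abel

theorem energy_sub_energy_le_setIntegral_symmDiff {k : G → ℝ} (hk : LocallyIntegrable k μ)
    (hk_even : Function.Even k) (hk_nonneg : ∀ z, 0 ≤ k z) (hΩmeas : MeasurableSet Ω)
    (hFmeas : MeasurableSet F) (hΩbd : Bornology.IsBounded Ω) (hFbd : Bornology.IsBounded F) :
    (∫ x in F, ∫ y in F, k (x - y) ∂μ ∂μ) - ∫ x in Ω, ∫ y in Ω, k (x - y) ∂μ ∂μ ≤
      ∫ x in symmDiff Ω F, ((∫ y in F, k (x - y) ∂μ) + ∫ y in Ω, k (x - y) ∂μ) ∂μ := by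
  have hP {A : Set G} (hA : Bornology.IsBounded A) : IntegrableOn
      (fun x => (∫ y in F, k (x - y) ∂μ) + ∫ y in Ω, k (x - y) ∂μ) A μ :=
    (integrableOn_setIntegral_comp_sub hk hA hFbd).add
      (integrableOn_setIntegral_comp_sub hk hA hΩbd)
  have hpos : 0 ≤ ∫ x in Ω \ F, ((∫ y in F, k (x - y) ∂μ) + ∫ y in Ω, k (x - y) ∂μ) ∂μ :=
    integral_nonneg fun x =>
      add_nonneg (integral_nonneg fun y => hk_nonneg _) (integral_nonneg fun y => hk_nonneg _)
  rw [energy_sub_energy_eq_setIntegral_sdiff hk hk_even hΩmeas hFmeas hΩbd hFbd,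
    Set.symmDiff_def, setIntegral_union disjoint_sdiff_sdiff (hFmeas.diff hΩmeas)
      (hP (hΩbd.subset sdiff_subset)) (hP (hFbd.subset sdiff_subset))]
  linarith

end EvenKernel

lemma locallyIntegrable_norm_rpow {E : Type*} [NormedAddCommGroup E] [NormedSpace ℝ E]
    [FiniteDimensional ℝ E] [MeasurableSpace E] [BorelSpace E] (μ : Measure E)
    [μ.IsAddHaarMeasure] (hd : 1 ≤ Module.finrank ℝ E) {s : ℝ}
    (hs : -(Module.finrank ℝ E : ℝ) < s) :
    LocallyIntegrable (fun x : E => ‖x‖ ^ s) μ :=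
  locallyIntegrable_of_norm_le_rpow (C := 1) (α := -s) hd (by linarith)
    (ae_of_all _ fun x => by
      rw [one_mul, neg_neg, Real.norm_of_nonneg (Real.rpow_nonneg (norm_nonneg x) s)])
    (measurable_norm.pow_const s).aestronglyMeasurable

theorem riesz_energy_diff_eq_potentials_general (N : ℕ) (α : ℝ)
    (hα : α ∈ Set.Ioo (0 : ℝ) N)
    (Ω F : Set (EuclideanSpace ℝ (Fin N)))
    (hΩmeas : MeasurableSet Ω) (hFmeas : MeasurableSet F)
    (hΩbd : Bornology.IsBounded Ω) (hFbd : Bornology.IsBounded F) :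
    ((∫ x in F, ∫ y in F, ‖x - y‖ ^ (α - N)) - (∫ x in Ω, ∫ y in Ω, ‖x - y‖ ^ (α - N)) =
      (∫ x in F \ Ω,
          ((∫ y in F, ‖x - y‖ ^ (α - N)) + (∫ y in Ω, ‖x - y‖ ^ (α - N)))) -
      (∫ x in Ω \ F,
          ((∫ y in F, ‖x - y‖ ^ (α - N)) + (∫ y in Ω, ‖x - y‖ ^ (α - N))))) ∧
    (∫ x in F, ∫ y in F, ‖x - y‖ ^ (α - N)) - (∫ x in Ω, ∫ y in Ω, ‖x - y‖ ^ (α - N)) ≤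
      ∫ x in symmDiff Ω F,
        ((∫ y in F, ‖x - y‖ ^ (α - N)) + (∫ y in Ω, ‖x - y‖ ^ (α - N))) := by
  have hdim : Module.finrank ℝ (EuclideanSpace ℝ (Fin N)) = N := finrank_euclideanSpace_fin
  have hN : 1 ≤ N := by exact_mod_cast hα.1.trans hα.2
  have hk : LocallyIntegrable (fun z : EuclideanSpace ℝ (Fin N) => ‖z‖ ^ (α - N)) :=
    locallyIntegrable_norm_rpow volume (by rw [hdim]; exact hN) (by rw [hdim]; linarith [hα.1])
  have hk_even : Function.Even fun z : EuclideanSpace ℝ (Fin N) => ‖z‖ ^ (α - N) := fun z => by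
    simp only [norm_neg]
  exact ⟨energy_sub_energy_eq_setIntegral_sdiff hk hk_even hΩmeas hFmeas hΩbd hFbd,
    energy_sub_energy_le_setIntegral_symmDiff hk hk_even
      (fun z => Real.rpow_nonneg (norm_nonneg z) _) hΩmeas hFmeas hΩbd hFbd⟩

/-- For `N ≥ 2`, `α ∈ (0,N)` and bounded measurable sets `Ω, F ⊆ ℝ^N`,
`V_α(F) − V_α(Ω) = ∫_{F\Ω} (v_F + v_Ω) − ∫_{Ω\F} (v_F + v_Ω)`, and in particular
`V_α(F) − V_α(Ω) ≤ ∫_{Ω Δ F} (v_F + v_Ω)`. -/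
theorem riesz_energy_diff_eq_potentials (N : ℕ) (hN : 2 ≤ N) (α : ℝ)
    (hα : α ∈ Set.Ioo (0 : ℝ) N)
    (Ω F : Set (EuclideanSpace ℝ (Fin N)))
    (hΩmeas : MeasurableSet Ω) (hFmeas : MeasurableSet F)
    (hΩbd : Bornology.IsBounded Ω) (hFbd : Bornology.IsBounded F) :
    ((∫ x in F, ∫ y in F, ‖x - y‖ ^ (α - N)) - (∫ x in Ω, ∫ y in Ω, ‖x - y‖ ^ (α - N)) =
      (∫ x in F \ Ω,
          ((∫ y in F, ‖x - y‖ ^ (α - N)) + (∫ y in Ω, ‖x - y‖ ^ (α - N)))) -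
      (∫ x in Ω \ F,
          ((∫ y in F, ‖x - y‖ ^ (α - N)) + (∫ y in Ω, ‖x - y‖ ^ (α - N))))) ∧
    (∫ x in F, ∫ y in F, ‖x - y‖ ^ (α - N)) - (∫ x in Ω, ∫ y in Ω, ‖x - y‖ ^ (α - N)) ≤
      ∫ x in symmDiff Ω F,
        ((∫ y in F, ‖x - y‖ ^ (α - N)) + (∫ y in Ω, ‖x - y‖ ^ (α - N))) :=
  riesz_energy_diff_eq_potentials_general N α hα Ω F hΩmeas hFmeas hΩbd hFbd
end

section
/- Let N ≥ 2, α ∈ (0,N), and let Ω ⊆ ℝ^N be a Lebesgue-measurable set of finite measure. Then the Riesz energy of Ω is finite and satisfies V_α(Ω) ≤ C₀ · |Ω|^{1+α/N}, where C₀ = ∫_B |z|^{α−N} dz and B is the open ball in ℝ^N centered at the origin with Lebesgue measure 1. -/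
/-!
For fixed `x`, the superlevel sets of `y ↦ ‖x - y‖ ^ (α - N)` are balls centred at `x`, so by the
layer-cake formula the potential `∫_Ω ‖x - y‖ ^ (α - N) dy` is at most the same integral over the
ball `B_ρ` about the origin with `|B_ρ| = |Ω|` (bathtub principle). Scaling `B_ρ = |Ω| ^ (1/N) • B`
gives `∫_{B_ρ} ‖z‖ ^ (α - N) dz = |Ω| ^ (α/N) C₀`, finite since `α > 0`, and integrating over
`x ∈ Ω` gives the bound.
-/

open MeasureTheory Metric Module Set

theorem setLIntegral_ofReal_eq_lintegral_measure_lt_inter {α : Type*} [MeasurableSpace α]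
    (μ : Measure α) {f : α → ℝ} (hf_nonneg : 0 ≤ f) (hf : Measurable f) (A : Set α) :
    ∫⁻ a in A, ENNReal.ofReal (f a) ∂μ = ∫⁻ t in Ioi 0, μ ({a | t < f a} ∩ A) := by
  rw [lintegral_eq_lintegral_meas_lt (μ.restrict A) (.of_forall hf_nonneg) hf.aemeasurable]
  exact lintegral_congr fun t ↦ Measure.restrict_apply (measurableSet_lt measurable_const hf)

theorem setOf_lt_norm_sub_rpow {E : Type*} [NormedAddCommGroup E] {c t : ℝ} (hc : c < 0)
    (ht : 0 < t) (x : E) :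
    {y | t < ‖x - y‖ ^ c} = ball x (t ^ c⁻¹) \ {x} := by
  ext y
  rw [mem_ofPred_eq, mem_sdiff, mem_ball, mem_singleton_iff, dist_comm, dist_eq_norm]
  rcases eq_or_ne y x with rfl | hyx
  · simp [Real.zero_rpow hc.ne, ht.not_gt]
  · rw [Real.lt_rpow_inv_iff_of_neg (norm_pos_iff.mpr (sub_ne_zero.mpr hyx.symm)) ht hc]
    simp [hyx]

section Bathtub

variable {E : Type*} [NormedAddCommGroup E] [MeasurableSpace E] [BorelSpace E]
  (μ : Measure E) [μ.IsAddHaarMeasure] {c t : ℝ}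

theorem measure_setOf_lt_norm_sub_rpow_inter_le (hc : c < 0) (ht : 0 < t) (x : E) (A : Set E) :
    μ ({y | t < ‖x - y‖ ^ c} ∩ A) ≤ min (μ (ball 0 (t ^ c⁻¹))) (μ A) := by
  refine le_min ?_ (measure_mono inter_subset_right)
  rw [setOf_lt_norm_sub_rpow hc ht, ← Measure.addHaar_ball_center μ x]
  exact measure_mono (inter_subset_left.trans sdiff_subset)

theorem measure_setOf_lt_norm_rpow_inter_ball [NormedSpace ℝ E] [FiniteDimensional ℝ E]
    [Nontrivial E] (hc : c < 0) (ht : 0 < t) (ρ : ℝ) :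
    μ ({z : E | t < ‖z‖ ^ c} ∩ ball 0 ρ) = min (μ (ball 0 (t ^ c⁻¹))) (μ (ball 0 ρ)) := by
  have h := setOf_lt_norm_sub_rpow hc ht (0 : E)
  simp only [zero_sub, norm_neg] at h
  rw [h, sdiff_inter_right_comm, measure_sdiff_null (measure_singleton _)]
  rcases le_total (t ^ c⁻¹) ρ with hle | hle
  · rw [inter_eq_left.mpr (ball_subset_ball hle),
      min_eq_left (measure_mono (ball_subset_ball hle))]
  · rw [inter_eq_right.mpr (ball_subset_ball hle),
      min_eq_right (measure_mono (ball_subset_ball hle))]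

theorem setLIntegral_norm_sub_rpow_le_of_measure_le_ball [NormedSpace ℝ E]
    [FiniteDimensional ℝ E] [Nontrivial E] (hc : c < 0) {A : Set E} {ρ : ℝ}
    (hA : μ A ≤ μ (ball 0 ρ)) (x : E) :
    ∫⁻ y in A, ENNReal.ofReal (‖x - y‖ ^ c) ∂μ ≤ ∫⁻ z in ball 0 ρ, ENNReal.ofReal (‖z‖ ^ c) ∂μ := by
  have hmeas (x : E) : Measurable fun y : E ↦ ‖x - y‖ ^ c := by fun_prop
  have hball := setLIntegral_ofReal_eq_lintegral_measure_lt_inter μ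
    (fun z : E ↦ Real.rpow_nonneg (norm_nonneg z) c) (by simpa using hmeas 0) (ball 0 ρ)
  rw [setLIntegral_ofReal_eq_lintegral_measure_lt_inter μ
    (fun y ↦ Real.rpow_nonneg (norm_nonneg _) c) (hmeas x), hball]
  refine setLIntegral_mono' measurableSet_Ioi fun t ht ↦ ?_
  rw [measure_setOf_lt_norm_rpow_inter_ball μ hc ht]
  exact (measure_setOf_lt_norm_sub_rpow_inter_le μ hc ht x A).trans (min_le_min_left _ hA)

end Bathtub

section Scaling

variable {E : Type*} [NormedAddCommGroup E] [NormedSpace ℝ E] [FiniteDimensional ℝ E]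
  [MeasurableSpace E] [BorelSpace E] (μ : Measure E) [μ.IsAddHaarMeasure]

theorem setIntegral_ball_norm_rpow_mul (c : ℝ) {R : ℝ} (hR : 0 < R) (r : ℝ) :
    ∫ z in ball 0 (R * r), ‖z‖ ^ c ∂μ = R ^ (finrank ℝ E + c) * ∫ z in ball 0 r, ‖z‖ ^ c ∂μ := by
  have h := Measure.setIntegral_comp_smul_of_pos μ (fun z : E ↦ ‖z‖ ^ c) (ball 0 r) hR
  simp only [norm_smul, Real.norm_of_nonneg hR.le, Real.mul_rpow hR.le (norm_nonneg _),
    integral_const_mul, _root_.smul_ball hR.ne', smul_zero, smul_eq_mul] at h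
  rw [Real.rpow_add hR, Real.rpow_natCast, mul_assoc, h, ← mul_assoc,
    mul_inv_cancel₀ (pow_ne_zero _ hR.ne'), one_mul]

theorem integrableOn_ball_norm_rpow [Nontrivial E] {c : ℝ} (hc : -(finrank ℝ E : ℝ) < c)
    (r : ℝ) : IntegrableOn (fun z : E ↦ ‖z‖ ^ c) (ball 0 r) μ := by
  refine integrableOn_ball_of_norm_le_rpow (C := 1) finrank_pos (neg_lt.mp hc)
    (.of_forall fun z ↦ ?_)
    (measurable_norm.pow_const c).aestronglyMeasurable
  rw [neg_neg, one_mul, Real.norm_of_nonneg (Real.rpow_nonneg (norm_nonneg z) c)]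

theorem setLIntegral_setLIntegral_norm_sub_rpow_le_s3 [Nontrivial E] {c : ℝ} (hc : c < 0) {A : Set E}
    {ρ : ℝ} (hA : μ A ≤ μ (ball 0 ρ)) :
    ∫⁻ x in A, ∫⁻ y in A, ENNReal.ofReal (‖x - y‖ ^ c) ∂μ ∂μ ≤
      μ A * ∫⁻ z in ball 0 ρ, ENNReal.ofReal (‖z‖ ^ c) ∂μ :=
  (lintegral_mono fun x ↦ setLIntegral_norm_sub_rpow_le_of_measure_le_ball μ hc hA x).trans_eq
    ((setLIntegral_const _ _).trans (mul_comm _ _))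

theorem measure_ball_rpow_inv_finrank_mul [Nontrivial E] {r : ℝ} (hball : μ (ball 0 r) = 1)
    {T : ℝ} (hT : 0 < T) :
    μ (ball 0 (T ^ (finrank ℝ E : ℝ)⁻¹ * r)) = ENNReal.ofReal T := by
  rw [Measure.addHaar_ball_mul_of_pos μ 0 (by positivity), hball, mul_one,
    Real.rpow_inv_natCast_pow hT.le finrank_pos.ne']

end Scaling

theorem riesz_energy_finite_and_le_general (N : ℕ) (α : ℝ)
    (hα : α ∈ Set.Ioo (0 : ℝ) N)
    (Ω : Set (EuclideanSpace ℝ (Fin N)))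
    (hΩfin : volume Ω < ⊤)
    (r : ℝ)
    (hball : volume (ball (0 : EuclideanSpace ℝ (Fin N)) r) = 1) :
    (∫⁻ x in Ω, ∫⁻ y in Ω, ENNReal.ofReal (‖x - y‖ ^ (α - N))) ≤
      ENNReal.ofReal
        ((∫ z in ball (0 : EuclideanSpace ℝ (Fin N)) r, ‖z‖ ^ (α - N)) *
          (volume Ω).toReal ^ (1 + α / N)) := by
  have : Nontrivial (EuclideanSpace ℝ (Fin N)) :=
    Module.nontrivial_of_finrank_pos (R := ℝ) (by simpa using hα.1.trans hα.2)
  obtain hΩ0 | hΩpos := eq_zero_or_pos (volume Ω)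
  · simp [Measure.restrict_eq_zero.mpr hΩ0]
  set T := (volume Ω).toReal
  have hT : 0 < T := ENNReal.toReal_pos hΩpos.ne' hΩfin.ne
  set ρ := T ^ (N : ℝ)⁻¹ * r
  have hρ : volume (ball (0 : EuclideanSpace ℝ (Fin N)) ρ) = volume Ω := by
    have h := measure_ball_rpow_inv_finrank_mul volume hball hT
    rwa [finrank_euclideanSpace_fin, ENNReal.ofReal_toReal hΩfin.ne] at h
  have hint : IntegrableOn (fun z : EuclideanSpace ℝ (Fin N) ↦ ‖z‖ ^ (α - N)) (ball 0 ρ) :=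
    integrableOn_ball_norm_rpow volume (by simpa using hα.1) ρ
  calc _ ≤ volume Ω * ∫⁻ z in ball 0 ρ, ENNReal.ofReal (‖z‖ ^ (α - N)) :=
        setLIntegral_setLIntegral_norm_sub_rpow_le_s3 volume (sub_neg.mpr hα.2) hρ.ge
    _ = ENNReal.ofReal (T * ∫ z : EuclideanSpace ℝ (Fin N) in ball 0 ρ, ‖z‖ ^ (α - N)) := by
        rw [ENNReal.ofReal_mul hT.le, ENNReal.ofReal_toReal hΩfin.ne,
          ofReal_integral_eq_lintegral_ofReal hint
            (.of_forall fun z ↦ Real.rpow_nonneg (norm_nonneg z) _)]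
    _ = _ := by
        rw [setIntegral_ball_norm_rpow_mul volume _ (by positivity), finrank_euclideanSpace_fin,
          add_sub_cancel, ← Real.rpow_mul hT.le, Real.rpow_add hT, Real.rpow_one, inv_mul_eq_div]
        congr 1
        ring

/-- For `N ≥ 2`, `α ∈ (0,N)` and a measurable set `Ω ⊆ ℝ^N` of finite
measure, the Riesz energy is finite and satisfies `V_α(Ω) ≤ C₀ · |Ω|^{1+α/N}`, where
`C₀ = ∫_B |z|^{α−N} dz` and `B` is the ball centered at the origin of Lebesgue measure 1.
(Stated with the lower Lebesgue integral, so that the inequality also encodes finiteness.) -/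
theorem riesz_energy_finite_and_le (N : ℕ) (hN : 2 ≤ N) (α : ℝ)
    (hα : α ∈ Set.Ioo (0 : ℝ) N)
    (Ω : Set (EuclideanSpace ℝ (Fin N)))
    (hΩmeas : MeasurableSet Ω) (hΩfin : volume Ω < ⊤)
    (r : ℝ) (hr : 0 < r)
    (hball : volume (ball (0 : EuclideanSpace ℝ (Fin N)) r) = 1) :
    (∫⁻ x in Ω, ∫⁻ y in Ω, ENNReal.ofReal (‖x - y‖ ^ (α - N))) ≤
      ENNReal.ofReal
        ((∫ z in ball (0 : EuclideanSpace ℝ (Fin N)) r, ‖z‖ ^ (α - N)) *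
          (volume Ω).toReal ^ (1 + α / N)) :=
  riesz_energy_finite_and_le_general N α hα Ω hΩfin r hball
end

section
/- Let N ≥ 2 and α ∈ (0,N). For all points X, Y, Z ∈ ℝ^N with X ≠ Y and X ≠ Z, one has the inequality |X−Y|^{α−N} − |X−Z|^{α−N} ≤ (N−α+1) · min(1, |Y−Z|) / min( |X−Y|^{N−α}, |X−Y|^{N−α+1} ). -/
/-!
Write `a = |X−Y|`, `b = |X−Z|`, `β = N − α > 0`; only `a < b` needs work. Then
`a^{-β} − b^{-β} = a^{-β} (1 − (a/b)^β) ≤ (β+1) a^{-β} (b−a)/b` by a Bernoulli-type bound,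
and `(b−a)/b ≤ min(1, |Y−Z|) / min(1, a)` because `b − a ≤ |Y−Z|` and `(b−a)/b ≤ 1`.
Finally `min(a^β, a^{β+1}) = a^β min(1, a)`.
-/

open Real

lemma one_sub_rpow_le_mul_one_sub {β t : ℝ} (hβ : 0 < β) (ht0 : 0 ≤ t) (ht1 : t ≤ 1) :
    1 - t ^ β ≤ (β + 1) * (1 - t) := by
  rcases le_or_gt 1 β with h | h
  · have hb := one_add_mul_self_le_rpow_one_add (s := t - 1) (by linarith) h
    rw [add_sub_cancel] at hb
    nlinarith
  · have h2 : t ^ (1 : ℝ) ≤ t ^ β := rpow_le_rpow_of_exponent_ge' ht0 ht1 hβ.le h.le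
    rw [rpow_one] at h2
    nlinarith

lemma rpow_neg_sub_rpow_neg_le {a b β : ℝ} (hβ : 0 < β) (ha : 0 < a) (hab : a ≤ b) :
    a ^ (-β) - b ^ (-β) ≤ (β + 1) * ((b - a) / b) / a ^ β := by
  have hb : 0 < b := ha.trans_le hab
  have hfactor : a ^ (-β) - b ^ (-β) = (1 - (a / b) ^ β) / a ^ β := by
    rw [div_rpow ha.le hb.le, rpow_neg ha.le, rpow_neg hb.le]
    field_simp
  have hratio : 1 - a / b = (b - a) / b := by field_simp
  rw [hfactor, ← hratio]
  gcongr
  exact one_sub_rpow_le_mul_one_sub hβ (div_nonneg ha.le hb.le) ((div_le_one hb).2 hab)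

lemma sub_div_le_min_one_div_min_one {a b d : ℝ} (ha : 0 < a) (hab : a ≤ b) (hd : b - a ≤ d) :
    (b - a) / b ≤ min 1 d / min 1 a := by
  have hb : 0 < b := ha.trans_le hab
  have hmina : 0 < min 1 a := lt_min one_pos ha
  calc (b - a) / b ≤ min 1 (b - a) / min 1 a := by
        rcases le_total (b - a) 1 with h | h
        · rw [min_eq_right h]
          exact div_le_div_of_nonneg_left (by linarith) hmina ((min_le_right 1 a).trans hab)
        · rw [min_eq_left h, le_div_iff₀ hmina]
          calc (b - a) / b * min 1 a ≤ 1 * 1 := by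
                gcongr
                · exact (div_le_one hb).2 (by linarith)
                · exact min_le_left 1 a
            _ = 1 := one_mul 1
    _ ≤ min 1 d / min 1 a := by gcongr

lemma min_rpow_rpow_add_one {a : ℝ} (ha : 0 < a) (β : ℝ) :
    min (a ^ β) (a ^ (β + 1)) = a ^ β * min 1 a := by
  rw [rpow_add ha, rpow_one, mul_min_of_nonneg _ _ (rpow_pos_of_pos ha β).le, mul_one]

lemma rpow_neg_sub_rpow_neg_le_of_le_add {a b d β : ℝ} (hβ : 0 < β) (ha : 0 < a) (hb : 0 < b)
    (hd : 0 ≤ d) (hbad : b ≤ a + d) :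
    a ^ (-β) - b ^ (-β) ≤ (β + 1) * min 1 d / (a ^ β * min 1 a) := by
  rcases le_or_gt b a with hba | hab
  · have hle : a ^ (-β) ≤ b ^ (-β) := rpow_le_rpow_of_nonpos hb hba (by linarith)
    have hnonneg : 0 ≤ (β + 1) * min 1 d / (a ^ β * min 1 a) := by positivity
    linarith
  · calc a ^ (-β) - b ^ (-β) ≤ (β + 1) * ((b - a) / b) / a ^ β :=
          rpow_neg_sub_rpow_neg_le hβ ha hab.le
      _ ≤ (β + 1) * (min 1 d / min 1 a) / a ^ β := by
          gcongr (β + 1) * ?_ / _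
          exact sub_div_le_min_one_div_min_one ha hab.le (by linarith)
      _ = (β + 1) * min 1 d / (a ^ β * min 1 a) := by ring

theorem riesz_kernel_diff_le_general (N : ℕ) (α : ℝ)
    (hα : α ∈ Set.Ioo (0 : ℝ) N)
    (X Y Z : EuclideanSpace ℝ (Fin N)) (hXY : X ≠ Y) (hXZ : X ≠ Z) :
    ‖X - Y‖ ^ (α - N) - ‖X - Z‖ ^ (α - N) ≤
      ((N : ℝ) - α + 1) * min 1 ‖Y - Z‖ /
        min (‖X - Y‖ ^ ((N : ℝ) - α)) (‖X - Y‖ ^ ((N : ℝ) - α + 1)) := by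
  have hXY' : 0 < ‖X - Y‖ := norm_sub_pos_iff.2 hXY
  rw [min_rpow_rpow_add_one hXY', show α - (N : ℝ) = -((N : ℝ) - α) by ring]
  exact rpow_neg_sub_rpow_neg_le_of_le_add (sub_pos.2 hα.2) hXY' (norm_sub_pos_iff.2 hXZ)
    (norm_nonneg _) (norm_sub_le_norm_sub_add_norm_sub X Y Z)

/-- For `N ≥ 2`, `α ∈ (0,N)` and points `X ≠ Y`, `X ≠ Z` in `ℝ^N`,
`|X−Y|^{α−N} − |X−Z|^{α−N} ≤ (N−α+1) · min(1,|Y−Z|) / min(|X−Y|^{N−α}, |X−Y|^{N−α+1})`. -/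
theorem riesz_kernel_diff_le (N : ℕ) (hN : 2 ≤ N) (α : ℝ)
    (hα : α ∈ Set.Ioo (0 : ℝ) N)
    (X Y Z : EuclideanSpace ℝ (Fin N)) (hXY : X ≠ Y) (hXZ : X ≠ Z) :
    ‖X - Y‖ ^ (α - N) - ‖X - Z‖ ^ (α - N) ≤
      ((N : ℝ) - α + 1) * min 1 ‖Y - Z‖ /
        min (‖X - Y‖ ^ ((N : ℝ) - α)) (‖X - Y‖ ^ ((N : ℝ) - α + 1)) :=
  riesz_kernel_diff_le_general N α hα X Y Z hXY hXZ
end
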